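/- arXiv:0802.1943 — 6 statements merged into one kernel-verified Lean document; each statement's English description precedes it below -/
import Mathlib

section
/- Let w be a weight sequence and let 1 ≤ i < j ≤ n with j − i + 1 = 2δ even. Then N^δ(Φ(w)_j) = Φ(w)_{i−1} if and only if exactly δ of the indices i, i+1, …, j satisfy w(l) = ∨ (equivalently, exactly half of the indices between i and j inclusive lie in w_∨). -/
open Module

namespace Springer

/-- The nilpotent endomorphism `N` of `ℂ^n` with two Jordan blocks of sizes `n-k` and `k`:
the basis vectors `e 0, …, e (n-k-1)` are `p 1, …, p (n-k)` and
`e (n-k), …, e (n-1)` are `q 1, …, q k`; `N` shifts each block down by one. -/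
def Nmap (n k : ℕ) : (Fin n → ℂ) →ₗ[ℂ] (Fin n → ℂ) where
  toFun x j := if h : j.val + 1 < n ∧ j.val + 1 ≠ n - k then x ⟨j.val + 1, h.1⟩ else 0
  map_add' x y := by
    funext j
    by_cases h : j.val + 1 < n ∧ j.val + 1 ≠ n - k <;> simp [h]
  map_smul' c x := by
    funext j
    by_cases h : j.val + 1 < n ∧ j.val + 1 ≠ n - k <;> simp [h]

/-- `span (p 1, …, p t, q 1, …, q b)` inside `ℂ^n`. -/
noncomputable def spanPQ (n k t b : ℕ) : Submodule ℂ (Fin n → ℂ) :=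
  Submodule.span ℂ {x | ∃ j : Fin n,
    ((j.val < t ∧ j.val < n - k) ∨ (n - k ≤ j.val ∧ j.val < n - k + b)) ∧ x = Pi.single j 1}

/-- `P = span (p 1, …, p (n-k))`. -/
noncomputable def Pmod (n k : ℕ) : Submodule ℂ (Fin n → ℂ) := spanPQ n k (n - k) 0

/-- `Q = span (q 1, …, q k)`. -/
noncomputable def Qmod (n k : ℕ) : Submodule ℂ (Fin n → ℂ) := spanPQ n k 0 k

/-- The projection of `V` onto `Q` along `P`. -/
def projQ (n k : ℕ) : (Fin n → ℂ) →ₗ[ℂ] (Fin n → ℂ) where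
  toFun x j := if n - k ≤ j.val then x j else 0
  map_add' x y := by
    funext j
    by_cases h : n - k ≤ j.val
    · simp only [Pi.add_apply, if_pos h]
    · simp only [Pi.add_apply, if_neg h, add_zero]
  map_smul' c x := by
    funext j
    by_cases h : n - k ≤ j.val
    · simp only [Pi.smul_apply, smul_eq_mul, if_pos h, RingHom.id_apply]
    · simp only [Pi.smul_apply, smul_eq_mul, if_neg h, mul_zero, RingHom.id_apply]

/-- A complete `N`-invariant flag in `ℂ^n`: a chain `F 0 ⊆ ⋯ ⊆ F n` with `dim F i = i`
(thus `F 0 = 0` and `F n = V`) and `N (F (i+1)) ⊆ F i`. -/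
def IsNFlag (n k : ℕ) (F : Fin (n + 1) → Submodule ℂ (Fin n → ℂ)) : Prop :=
  Monotone F ∧ (∀ i : Fin (n + 1), finrank ℂ (F i) = i.val) ∧
    ∀ i : Fin n, Submodule.map (Nmap n k) (F i.succ) ≤ F i.castSucc

/-- A flag is torus fixed if each subspace is spanned by its intersections with `P` and `Q`. -/
def TorusFixed (n k : ℕ) (F : Fin (n + 1) → Submodule ℂ (Fin n → ℂ)) : Prop :=
  ∀ i, F i = (F i ⊓ Pmod n k) ⊔ (F i ⊓ Qmod n k)

/-- A weight sequence (row-strict tableau) of shape `(n-k, k)`: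
`true` encodes `∨` and `false` encodes `∧`; there are exactly `k` symbols `∨`. -/
def IsWeightSeq (n k : ℕ) (w : Fin n → Bool) : Prop :=
  (Finset.univ.filter fun i => w i = true).card = k

/-- `t i` = number of 1-based positions `≤ i` labelled `∧`. -/
def tcount (n : ℕ) (w : Fin n → Bool) (i : ℕ) : ℕ :=
  (Finset.univ.filter fun j : Fin n => j.val < i ∧ w j = false).card

/-- `b i` = number of 1-based positions `≤ i` labelled `∨`. -/
def bcount (n : ℕ) (w : Fin n → Bool) (i : ℕ) : ℕ :=
  (Finset.univ.filter fun j : Fin n => j.val < i ∧ w j = true).card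

/-- The torus fixed flag `Φ(w)` attached to a weight sequence `w`:
`Φ(w) i = span (p 1, …, p (t i), q 1, …, q (b i))`. -/
noncomputable def PhiFlag (n k : ℕ) (w : Fin n → Bool) : Fin (n + 1) → Submodule ℂ (Fin n → ℂ) :=
  fun i => spanPQ n k (tcount n w i.val) (bcount n w i.val)

/-- A crossingless matching on the points `1, …, n`: a set of cups `(i, j)` with
`1 ≤ i < j ≤ n`, pairwise disjoint, mutually non-crossing, and such that no unmatched
point (ray) lies strictly inside any cup. -/
structure CrossinglessMatching (n : ℕ) where
  cups : Finset (ℕ × ℕ)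
  mem_range : ∀ p ∈ cups, 1 ≤ p.1 ∧ p.1 < p.2 ∧ p.2 ≤ n
  disjoint' : ∀ p ∈ cups, ∀ q ∈ cups, p ≠ q →
    p.1 ≠ q.1 ∧ p.1 ≠ q.2 ∧ p.2 ≠ q.1 ∧ p.2 ≠ q.2
  noncross : ∀ p ∈ cups, ∀ q ∈ cups, ¬(p.1 < q.1 ∧ q.1 < p.2 ∧ p.2 < q.2)
  rays_outside : ∀ p ∈ cups, ∀ m : ℕ, p.1 < m → m < p.2 → ∃ q ∈ cups, m = q.1 ∨ m = q.2

/-- The point `m ∈ {1, …, n}` is matched (lies on a cup) in `C`. -/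
def Matched (n : ℕ) (C : CrossinglessMatching n) (m : ℕ) : Prop :=
  ∃ p ∈ C.cups, m = p.1 ∨ m = p.2

/-- A standard tableau of shape `(n-k, k)`: a filling of the two-row Young diagram by
the numbers `1, …, n`, each used exactly once, with rows and columns strictly
decreasing read from the top left. -/
structure StandardTableau (n k : ℕ) where
  top : Fin (n - k) → ℕ
  bot : Fin k → ℕ
  top_strict : ∀ i j : Fin (n - k), i < j → top j < top i
  bot_strict : ∀ i j : Fin k, i < j → bot j < bot i
  col_strict : ∀ (i : Fin (n - k)) (j : Fin k), i.val = j.val → bot j < top i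
  mem_iff : ∀ m : ℕ, (1 ≤ m ∧ m ≤ n) ↔ ((∃ i, top i = m) ∨ (∃ j, bot j = m))
  top_ne_bot : ∀ (i : Fin (n - k)) (j : Fin k), top i ≠ bot j

/-- `C` is the crossingless matching `m(S)` associated with the standard tableau `S`:
it has `k` cups and its left cup endpoints are exactly the bottom-row entries of `S`. -/
def IsMatchOf (n k : ℕ) (S : StandardTableau n k) (C : CrossinglessMatching n) : Prop :=
  C.cups.card = k ∧ ∀ m : ℕ, (∃ p ∈ C.cups, p.1 = m) ↔ ∃ j, S.bot j = m

/-- The weight sequence of a standard tableau: `∨` (i.e. `true`) exactly on the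
bottom-row entries. -/
def tabWeight (n k : ℕ) (S : StandardTableau n k) : Fin n → Bool :=
  fun j => decide (∃ i, S.bot i = j.val + 1)

/-- The cup conditions cutting out `Y_S`: for every cup `(i, σ i)` of the matching,
`N ^ δ i (F (σ i)) = F (i - 1)` where `δ i = (σ i - i + 1)/2`. -/
def CupCond (n k : ℕ) (C : CrossinglessMatching n)
    (F : Fin (n + 1) → Submodule ℂ (Fin n → ℂ)) : Prop :=
  ∀ p ∈ C.cups, ∀ (h1 : p.1 - 1 < n + 1) (h2 : p.2 < n + 1),
    Submodule.map ((Nmap n k) ^ ((p.2 - p.1 + 1) / 2)) (F ⟨p.2, h2⟩) = F ⟨p.1 - 1, h1⟩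

/-- The ray conditions cutting out `Y_S` (for the weight sequence of `S`): for every
ray `m` of the matching, `F m = (N ^ b m)⁻¹ (range (N ^ (n - k - t m + b m)))`. -/
def RayCond (n k : ℕ) (w : Fin n → Bool) (C : CrossinglessMatching n)
    (F : Fin (n + 1) → Submodule ℂ (Fin n → ℂ)) : Prop :=
  ∀ m : ℕ, 1 ≤ m → ∀ hm : m < n + 1, ¬ Matched n C m →
    F ⟨m, hm⟩ = Submodule.comap ((Nmap n k) ^ (bcount n w m))
      (LinearMap.range ((Nmap n k) ^ (n - k - tcount n w m + bcount n w m)))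

/-- Membership in the (Spaltenstein–Vargas–Fung) component `Y_S`, where `C = m(S)`. -/
def InYS (n k : ℕ) (S : StandardTableau n k) (C : CrossinglessMatching n)
    (F : Fin (n + 1) → Submodule ℂ (Fin n → ℂ)) : Prop :=
  IsNFlag n k F ∧ CupCond n k C F ∧ RayCond n k (tabWeight n k S) C F

/-- The weight sequence `v` orients the crossingless matching `C`: opposite labels at
the two endpoints of every cup, and `∧` at every ray. -/
def OrientsMatching (n : ℕ) (v : Fin n → Bool) (C : CrossinglessMatching n) : Prop :=
  (∀ p ∈ C.cups, ∀ (h1 : p.1 - 1 < n) (h2 : p.2 - 1 < n),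
      v ⟨p.1 - 1, h1⟩ ≠ v ⟨p.2 - 1, h2⟩) ∧
  (∀ m : ℕ, 1 ≤ m → m ≤ n → ¬ Matched n C m → ∀ h : m - 1 < n, v ⟨m - 1, h⟩ = false)

/-- `C` is the matching `m(w)` produced from the weight sequence `w` by repeatedly
joining a pair `i < j` with `w i = ∨`, `w j = ∧` and all points strictly between them
already matched, until no such pair remains. -/
def IsMw (n : ℕ) (w : Fin n → Bool) (C : CrossinglessMatching n) : Prop :=
  (∀ p ∈ C.cups, ∀ (h1 : p.1 - 1 < n) (h2 : p.2 - 1 < n),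
      w ⟨p.1 - 1, h1⟩ = true ∧ w ⟨p.2 - 1, h2⟩ = false) ∧
  ¬ ∃ i j : ℕ, 1 ≤ i ∧ i < j ∧ j ≤ n ∧ ¬ Matched n C i ∧ ¬ Matched n C j ∧
      (∀ h : i - 1 < n, w ⟨i - 1, h⟩ = true) ∧ (∀ h : j - 1 < n, w ⟨j - 1, h⟩ = false) ∧
      (∀ m : ℕ, i < m → m < j → Matched n C m)

/-- `Cw` is the completed matching `C(w)`: a crossingless matching with `k` cups
containing `m(w) = Cm` on whose every cup `w` puts opposite labels. -/
def IsCw (n k : ℕ) (w : Fin n → Bool) (Cm Cw : CrossinglessMatching n) : Prop :=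
  Cm.cups ⊆ Cw.cups ∧ Cw.cups.card = k ∧
  ∀ p ∈ Cw.cups, ∀ (h1 : p.1 - 1 < n) (h2 : p.2 - 1 < n),
    w ⟨p.1 - 1, h1⟩ ≠ w ⟨p.2 - 1, h2⟩

/-- Membership in the closed attracting set `St(w)`, where `S = S(w)` and `Cw = C(w)`:
a flag of `Y_{S(w)}` such that `F i = Φ(w) i` for every `i` with `w i = ∧` which is a
left cup endpoint of `C(w)`. -/
def InSt (n k : ℕ) (w : Fin n → Bool) (S : StandardTableau n k)
    (Cw : CrossinglessMatching n) (F : Fin (n + 1) → Submodule ℂ (Fin n → ℂ)) : Prop :=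
  InYS n k S Cw F ∧
  ∀ i : ℕ, ∀ hi : i < n + 1, (∀ h : i - 1 < n, w ⟨i - 1, h⟩ = false) →
    (∃ p ∈ Cw.cups, p.1 = i) → F ⟨i, hi⟩ = PhiFlag n k w ⟨i, hi⟩

/-- The generating relation of `∼_C`: `a ∼ σ(a+1)` whenever `a+1` is a left cup
endpoint of `C`. -/
def cupRel (n : ℕ) (C : CrossinglessMatching n) (a b : ℕ) : Prop :=
  ∃ p ∈ C.cups, p.1 = a + 1 ∧ p.2 = b

/-- The equivalence relation `∼_C` on `{0, 1, …, n}`. -/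
def simRel (n : ℕ) (C : CrossinglessMatching n) : ℕ → ℕ → Prop :=
  Relation.EqvGen (cupRel n C)

/-- The equivalence relation `≈_{C,D}` on `{0, 1, …, n}` generated by `∼_C` and `∼_D`. -/
def approxRel (n : ℕ) (C D : CrossinglessMatching n) : ℕ → ℕ → Prop :=
  Relation.EqvGen (fun a b => cupRel n C a b ∨ cupRel n D a b)

/-- Adjacency in the glued diagram `D̄C`: `i` and `j` are joined by a cup of `C` or of `D`. -/
def Adj (n : ℕ) (C D : CrossinglessMatching n) (i j : ℕ) : Prop :=
  (i, j) ∈ C.cups ∨ (j, i) ∈ C.cups ∨ (i, j) ∈ D.cups ∨ (j, i) ∈ D.cups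

/-- Lying in the same connected component of the glued diagram `D̄C`. -/
def Conn (n : ℕ) (C D : CrossinglessMatching n) : ℕ → ℕ → Prop :=
  Relation.EqvGen (Adj n C D)

/-- The component of `v` in the glued diagram is a circle: every vertex of the
component is matched both in `C` and in `D`. -/
def IsCircleComp (n : ℕ) (C D : CrossinglessMatching n) (v : ℕ) : Prop :=
  ∀ u, Conn n C D u v → Matched n C u ∧ Matched n D u

/-- `v` is the leftmost vertex of its connected component (circle or line) of the
glued diagram. -/
def IsLeftmost (n : ℕ) (C D : CrossinglessMatching n) (v : ℕ) : Prop :=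
  1 ≤ v ∧ v ≤ n ∧ ∀ u, 1 ≤ u → Conn n C D u v → v ≤ u

/-- An orientation of the glued diagram `D̄C` (with `C = m(w)` and `D = m(w')`):
a weight sequence assigning opposite labels to the endpoints of every cup of `C` and
of `D`, agreeing with `w` at every ray of `C` and with `w'` at every ray of `D`. -/
def OrientsGlued (n k : ℕ) (w w' : Fin n → Bool) (C D : CrossinglessMatching n)
    (v : Fin n → Bool) : Prop :=
  IsWeightSeq n k v ∧
  (∀ p ∈ C.cups, ∀ (h1 : p.1 - 1 < n) (h2 : p.2 - 1 < n),
      v ⟨p.1 - 1, h1⟩ ≠ v ⟨p.2 - 1, h2⟩) ∧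
  (∀ p ∈ D.cups, ∀ (h1 : p.1 - 1 < n) (h2 : p.2 - 1 < n),
      v ⟨p.1 - 1, h1⟩ ≠ v ⟨p.2 - 1, h2⟩) ∧
  (∀ i : Fin n, ¬ Matched n C (i.val + 1) → v i = w i) ∧
  (∀ i : Fin n, ¬ Matched n D (i.val + 1) → v i = w' i)

/-- The component of `v0` in the glued diagram is orientable: it admits a labeling of
its vertices by `∧, ∨`, opposite across every edge, agreeing with `w` at every vertex
which is a ray of `C` and with `w'` at every vertex which is a ray of `D`. -/
def ComponentOrientable (n : ℕ) (w w' : Fin n → Bool) (C D : CrossinglessMatching n)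
    (v0 : ℕ) : Prop :=
  ∃ g : ℕ → Bool,
    (∀ i j, Conn n C D i v0 → Adj n C D i j → g i ≠ g j) ∧
    (∀ i, Conn n C D i v0 → 1 ≤ i → i ≤ n → ¬ Matched n C i →
      ∀ h : i - 1 < n, g i = w ⟨i - 1, h⟩) ∧
    (∀ i, Conn n C D i v0 → 1 ≤ i → i ≤ n → ¬ Matched n D i →
      ∀ h : i - 1 < n, g i = w' ⟨i - 1, h⟩)

/-- A walk in the glued multigraph `D̄C` from `a` to `b`: a list of edges, each tagged
by `true` (an edge of `C`) or `false` (an edge of `D`), consecutively incident. -/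
def IsGluedWalk (n : ℕ) (C D : CrossinglessMatching n) : ℕ → ℕ → List (Bool × ℕ × ℕ) → Prop
  | a, b, [] => a = b
  | a, b, e :: es =>
      (if e.1 = true then (e.2.1, e.2.2) ∈ C.cups else (e.2.1, e.2.2) ∈ D.cups) ∧
      ((a = e.2.1 ∧ IsGluedWalk n C D e.2.2 b es) ∨ (a = e.2.2 ∧ IsGluedWalk n C D e.2.1 b es))

/-- The standard flag of `ℂ^n`. -/
noncomputable def stdFlag (n k : ℕ) : Fin (n + 1) → Submodule ℂ (Fin n → ℂ) :=
  fun i => spanPQ n k (min i.val (n - k)) (i.val - (n - k))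

/-! `Φ(w)_m` is the coordinate subspace spanned by the first `t_m` vectors of the `p`-block and
the first `b_m` vectors of the `q`-block, and `N^δ` maps such a subspace onto the one with counts
`t - δ` and `b - δ` (truncated at `0`). Coordinate subspaces determine their counts, so the cup
condition says `t_j - δ = t_{i-1}` and `b_j - δ = b_{i-1}`. As `t_m + b_m = m` and
`j - (i - 1) = 2δ`, this holds exactly when `b_j - b_{i-1} = δ`. -/

open Finset

def pqIndices (n k t b : ℕ) : Set (Fin n) :=
  {j | (j.val < t ∧ j.val < n - k) ∨ (n - k ≤ j.val ∧ j.val < n - k + b)}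

lemma spanPQ_eq_span_image (n k t b : ℕ) :
    spanPQ n k t b = Submodule.span ℂ ((fun j => Pi.single j 1) '' pqIndices n k t b) := by
  simp only [spanPQ, pqIndices, Set.image, Set.mem_ofPred_eq, eq_comm]

lemma Nmap_single (n k : ℕ) (m : Fin n) :
    Nmap n k (Pi.single m 1) =
      if h : 1 ≤ m.val ∧ m.val ≠ n - k then Pi.single ⟨m.val - 1, by omega⟩ 1 else 0 := by
  funext j
  simp only [Nmap, LinearMap.coe_mk, AddHom.coe_mk]
  split_ifs <;> simp only [Pi.single_apply, Fin.ext_iff, Pi.zero_apply] <;> (try split_ifs) <;>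
    first | rfl | omega

lemma map_Nmap_spanPQ {n k t b : ℕ} (ht : t ≤ n - k) (hb : n - k + b ≤ n) :
    (spanPQ n k t b).map (Nmap n k) = spanPQ n k (t - 1) (b - 1) := by
  rw [spanPQ_eq_span_image, spanPQ_eq_span_image, Submodule.map_span, ← Set.image_comp]
  apply le_antisymm <;> rw [Submodule.span_le] <;> rintro _ ⟨m, hm, rfl⟩ <;>
    simp only [pqIndices, Set.mem_ofPred_eq] at hm
  · rw [Function.comp_apply, Nmap_single]
    split_ifs with h
    · exact Submodule.subset_span ⟨_, by simp only [pqIndices, Set.mem_ofPred_eq]; omega, rfl⟩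
    · exact zero_mem _
  · refine Submodule.subset_span
      ⟨⟨m.val + 1, by omega⟩, by simp only [pqIndices, Set.mem_ofPred_eq]; omega, ?_⟩
    rw [Function.comp_apply, Nmap_single,
      dif_pos (show 1 ≤ m.val + 1 ∧ m.val + 1 ≠ n - k by omega)]
    rfl

lemma map_Nmap_pow_spanPQ {n k t b : ℕ} (ht : t ≤ n - k) (hb : n - k + b ≤ n) (δ : ℕ) :
    (spanPQ n k t b).map (Nmap n k ^ δ) = spanPQ n k (t - δ) (b - δ) := by
  induction δ with
  | zero => exact Submodule.map_id _
  | succ d ih =>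
    rw [pow_succ', Module.End.mul_eq_comp, Submodule.map_comp, ih,
      map_Nmap_spanPQ (by omega) (by omega), Nat.sub_sub, Nat.sub_sub]

lemma mem_pqIndices_of_spanPQ_le {n k t b t' b' : ℕ} (h : spanPQ n k t b ≤ spanPQ n k t' b')
    {j : Fin n} (hj : j ∈ pqIndices n k t b) : j ∈ pqIndices n k t' b' := by
  rw [spanPQ_eq_span_image, spanPQ_eq_span_image] at h
  by_contra hj'
  exact (Pi.linearIndependent_single_one (Fin n) ℂ).notMem_span_image hj'
    (h (Submodule.subset_span ⟨j, hj, rfl⟩))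

lemma spanPQ_inj {n k t b t' b' : ℕ} (ht : t ≤ n - k) (hb : n - k + b ≤ n)
    (ht' : t' ≤ n - k) (hb' : n - k + b' ≤ n) :
    spanPQ n k t b = spanPQ n k t' b' ↔ t = t' ∧ b = b' := by
  refine ⟨fun h => ?_, fun ⟨ht, hb⟩ => ht ▸ hb ▸ rfl⟩
  have key (m : ℕ) (hm : m < n) :
      (⟨m, hm⟩ : Fin n) ∈ pqIndices n k t b ↔ ⟨m, hm⟩ ∈ pqIndices n k t' b' :=
    ⟨mem_pqIndices_of_spanPQ_le h.le, mem_pqIndices_of_spanPQ_le h.ge⟩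
  simp only [pqIndices, Set.mem_ofPred_eq] at key
  constructor <;> by_contra hne
  · have := key (min t t') (by omega)
    omega
  · have := key (n - k + min b b') (by omega)
    omega

lemma tcount_add_bcount (n : ℕ) (w : Fin n → Bool) {m : ℕ} (hm : m ≤ n) :
    tcount n w m + bcount n w m = m := by
  rw [tcount, bcount, ← card_union_of_disjoint]
  · rw [← filter_or, filter_congr (q := fun j : Fin n => j.val < m)
      (by intro l _; cases w l <;> simp), Fin.card_filter_val_lt, min_eq_right hm]
  · rw [disjoint_filter]
    intro l _ h1 h2
    simp [h1.2] at h2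

lemma tcount_mono (n : ℕ) (w : Fin n → Bool) : Monotone (tcount n w) :=
  fun _ _ h => card_le_card (monotone_filter_right _ fun _ _ hj => ⟨by omega, hj.2⟩)

lemma bcount_mono (n : ℕ) (w : Fin n → Bool) : Monotone (bcount n w) :=
  fun _ _ h => card_le_card (monotone_filter_right _ fun _ _ hj => ⟨by omega, hj.2⟩)

lemma bcount_self {n k : ℕ} {w : Fin n → Bool} (hw : IsWeightSeq n k w) : bcount n w n = k := by
  simp only [bcount, Fin.is_lt, true_and]
  exact hw

lemma tcount_le_and_add_bcount_le {n k : ℕ} {w : Fin n → Bool} (hw : IsWeightSeq n k w)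
    {m : ℕ} (hm : m ≤ n) : tcount n w m ≤ n - k ∧ n - k + bcount n w m ≤ n := by
  have := tcount_add_bcount n w hm
  have := tcount_add_bcount n w le_rfl
  have := tcount_mono n w hm
  have := bcount_mono n w hm
  have := bcount_self hw
  omega

lemma bcount_sub_one_add_card_filter (n : ℕ) (w : Fin n → Bool) {i j : ℕ}
    (hij : i ≤ j + 1) :
    bcount n w (i - 1) +
      (univ.filter fun l : Fin n => i ≤ l.val + 1 ∧ l.val + 1 ≤ j ∧ w l = true).card =
      bcount n w j := by
  rw [bcount, bcount, ← card_union_of_disjoint]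
  · congr 1
    ext l
    simp only [mem_union, mem_filter, mem_univ, true_and]
    by_cases hl : w l = true <;> simp only [hl, Bool.false_eq_true, and_true, and_false, or_false]
    omega
  · rw [disjoint_filter]
    intro l _ h1 h2
    omega

/-- For `1 ≤ i < j ≤ n` with `j - i + 1 = 2δ`, we have
`N^δ (Φ(w) j) = Φ(w) (i-1)` if and only if exactly `δ` of the indices `i, …, j`
carry the label `∨`. -/
theorem cup_condition_iff_half (n k : ℕ)
    (w : Fin n → Bool) (hw : IsWeightSeq n k w)
    (i j δ : ℕ) (hi : 1 ≤ i) (hij : i < j) (hjn : j ≤ n) (hδ : j - i + 1 = 2 * δ) :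
    Submodule.map ((Nmap n k) ^ δ) (PhiFlag n k w ⟨j, by omega⟩) =
        PhiFlag n k w ⟨i - 1, by omega⟩ ↔
      (Finset.univ.filter fun l : Fin n =>
          i ≤ l.val + 1 ∧ l.val + 1 ≤ j ∧ w l = true).card = δ := by
  have hi_le : i - 1 ≤ n := by omega
  obtain ⟨htj, hbj⟩ := tcount_le_and_add_bcount_le hw hjn
  obtain ⟨hti, hbi⟩ := tcount_le_and_add_bcount_le hw hi_le
  have hj_sum := tcount_add_bcount n w hjn
  have hi_sum := tcount_add_bcount n w hi_le
  have h_window := bcount_sub_one_add_card_filter n w (show i ≤ j + 1 by omega)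
  change (spanPQ n k _ _).map _ = spanPQ n k _ _ ↔ _
  rw [map_Nmap_pow_spanPQ htj hbj, spanPQ_inj (by omega) (by omega) hti hbi]
  omega

end Springer
end

section
/- Let F be a complete N-invariant flag and let a, b, δ be positive integers with b = a + 2δ − 1 ≤ n and δ ≤ k. If N^δ(F_b) = F_{a−1}, then ker(N^δ) ⊆ F_b; moreover the kernel of the restriction of N^δ to F_b equals ker(N^δ), which has dimension 2δ. -/
open Module

/-!
Restricting `N^δ` to `F_b` and applying rank–nullity, the hypothesis `N^δ(F_b) = F_{a-1}` gives
`dim (F_b ∩ ker N^δ) = b - (a - 1) = 2δ`. On the other hand `N` has only two Jordan blocks, so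
`dim ker N ≤ 2` and hence `dim ker N^δ ≤ 2δ`, since the kernel dimension of a composite is at
most the sum of the kernel dimensions. So `F_b ∩ ker N^δ` is all of `ker N^δ`.
-/

namespace LinearMap

variable {K V V₂ V₃ : Type*} [DivisionRing K] [AddCommGroup V] [Module K V]
  [AddCommGroup V₂] [Module K V₂] [AddCommGroup V₃] [Module K V₃] [FiniteDimensional K V]

theorem finrank_map_add_finrank_inf_ker (f : V →ₗ[K] V₂) (p : Submodule K V) :
    finrank K (p.map f) + finrank K (p ⊓ ker f : Submodule K V) = finrank K p := by
  have := finrank_range_add_finrank_ker (f.domRestrict p)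
  rwa [range_domRestrict, ker_domRestrict,
    ← Submodule.finrank_map_subtype_eq, Submodule.map_comap_subtype] at this

theorem finrank_ker_comp_le [FiniteDimensional K V₂] (f : V →ₗ[K] V₂)
    (g : V₂ →ₗ[K] V₃) :
    finrank K (ker (g ∘ₗ f)) ≤ finrank K (ker g) + finrank K (ker f) := by
  have hmap : (ker (g ∘ₗ f)).map f ≤ ker g := by
    rintro _ ⟨x, hx, rfl⟩
    exact hx
  have := finrank_map_add_finrank_inf_ker f (ker (g ∘ₗ f))
  have := Submodule.finrank_mono hmap
  have := Submodule.finrank_mono (inf_le_right : ker (g ∘ₗ f) ⊓ ker f ≤ _)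
  omega

theorem finrank_ker_pow_le (f : Module.End K V) (m : ℕ) :
    finrank K (ker (f ^ m)) ≤ m * finrank K (ker f) := by
  induction m with
  | zero => simp [Module.End.one_eq_id]
  | succ m ih =>
    rw [pow_succ, Module.End.mul_eq_comp, Nat.succ_mul]
    have := finrank_ker_comp_le f (f ^ m)
    omega

end LinearMap

namespace Springer

theorem apply_eq_zero_of_mem_ker_Nmap {n k : ℕ} {x : Fin n → ℂ}
    (hx : x ∈ LinearMap.ker (Nmap n k)) (j : Fin n) (hj₀ : j.val ≠ 0)
    (hjk : j.val ≠ n - k) : x j = 0 := by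
  have := congr_fun hx ⟨j.val - 1, by omega⟩
  have hj : j.val - 1 + 1 < n ∧ j.val - 1 + 1 ≠ n - k := by omega
  simpa [Nmap, hj, hjk, Nat.sub_add_cancel (Nat.one_le_iff_ne_zero.mpr hj₀)] using this

theorem finrank_ker_Nmap_le (n k : ℕ) : finrank ℂ (LinearMap.ker (Nmap n k)) ≤ 2 := by
  let S := {j : Fin n // j.val = 0 ∨ j.val = n - k}
  have hS : Fintype.card S ≤ 2 := by
    refine (Fintype.card_le_of_injective (fun j : S => decide (j.val.val = 0)) ?_).trans_eq
      Fintype.card_bool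
    rintro ⟨⟨i, _⟩, hi⟩ ⟨⟨j, _⟩, hj⟩ hij
    simp only [decide_eq_decide] at hij
    simp only at hi hj
    obtain rfl : i = j := by omega
    rfl
  let restrict :=
    LinearMap.funLeft ℂ ℂ (Subtype.val : S → Fin n) ∘ₗ (LinearMap.ker (Nmap n k)).subtype
  have hinj : Function.Injective restrict := by
    rw [← LinearMap.ker_eq_bot, Submodule.eq_bot_iff]
    rintro ⟨x, hx⟩ hS0
    ext j
    by_cases hj : j.val = 0 ∨ j.val = n - k
    · exact congr_fun hS0 ⟨j, hj⟩
    · exact apply_eq_zero_of_mem_ker_Nmap hx j (by omega) (by omega)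
  calc finrank ℂ (LinearMap.ker (Nmap n k)) ≤ finrank ℂ (S → ℂ) :=
        LinearMap.finrank_le_finrank_of_injective hinj
    _ ≤ 2 := by rwa [Module.finrank_fintype_fun_eq_card]

theorem finrank_ker_Nmap_pow_le (n k δ : ℕ) :
    finrank ℂ (LinearMap.ker (Nmap n k ^ δ)) ≤ 2 * δ :=
  (LinearMap.finrank_ker_pow_le _ δ).trans <|
    (Nat.mul_le_mul_left δ (finrank_ker_Nmap_le n k)).trans_eq (mul_comm δ 2)

/-- If `b = a + 2δ - 1 ≤ n`, `δ ≤ k`, and `N^δ (F b) = F (a-1)` for a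
complete `N`-invariant flag `F`, then `ker (N^δ) ⊆ F b`; moreover the kernel of the
restriction of `N^δ` to `F b` equals `ker (N^δ)`, which has dimension `2δ`. -/
theorem kernel_in_flag (n k : ℕ)
    (F : Fin (n + 1) → Submodule ℂ (Fin n → ℂ)) (hF : IsNFlag n k F)
    (a b δ : ℕ) (ha : 1 ≤ a) (hb : b = a + 2 * δ - 1) (hbn : b ≤ n)
    (hmap : Submodule.map ((Nmap n k) ^ δ) (F ⟨b, by omega⟩) = F ⟨a - 1, by omega⟩) :
    LinearMap.ker ((Nmap n k) ^ δ) ≤ F ⟨b, by omega⟩ ∧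
    F ⟨b, by omega⟩ ⊓ LinearMap.ker ((Nmap n k) ^ δ) = LinearMap.ker ((Nmap n k) ^ δ) ∧
    finrank ℂ (LinearMap.ker ((Nmap n k) ^ δ)) = 2 * δ := by
  have hdim :
      finrank ℂ (F ⟨b, by omega⟩ ⊓ LinearMap.ker (Nmap n k ^ δ) : Submodule ℂ _) = 2 * δ := by
    have := LinearMap.finrank_map_add_finrank_inf_ker (Nmap n k ^ δ) (F ⟨b, by omega⟩)
    rw [hmap, hF.2.1, hF.2.1, Fin.val_mk, Fin.val_mk] at this
    omega
  have hker :
      F ⟨b, by omega⟩ ⊓ LinearMap.ker (Nmap n k ^ δ) = LinearMap.ker (Nmap n k ^ δ) :=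
    Submodule.eq_of_le_of_finrank_le inf_le_right (hdim ▸ finrank_ker_Nmap_pow_le n k δ)
  exact ⟨hker ▸ inf_le_left, hker, hker ▸ hdim⟩

end Springer
end

section
/- Let C be a crossingless matching on {1,…,n} with partner map σ, and let ∼_C be the equivalence relation on {0,1,…,n} generated by the relations a ∼_C σ(a+1) for every a such that a+1 is a left cup endpoint of C. If {a,b} is a cup of C with a < b (so b = σ(a)), then b ∼_C a−1 and a ∼_C b−1. -/
open Module

namespace Springer

/-!
The relation `b ∼ a - 1` is itself a generating relation, as `a = (a - 1) + 1`. For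
`a ∼ b - 1`, the points strictly inside the cup `(a, b)` are covered by cups nested in it,
and read from left to right these form a chain of adjacent cups
`(a + 1, c₁), (c₁ + 1, c₂), …, (cᵣ + 1, b - 1)`; each is a generating relation, so
`a ∼ c₁ ∼ ⋯ ∼ b - 1`.
-/

namespace CrossinglessMatching

variable {n : ℕ} {C : CrossinglessMatching n}

theorem snd_lt_of_fst_mem_Ioo {p q : ℕ × ℕ} (hp : p ∈ C.cups) (hq : q ∈ C.cups)
    (h₁ : p.1 < q.1) (h₂ : q.1 < p.2) : q.2 < p.2 := by
  have hne : p ≠ q := fun h => by subst h; omega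
  have := C.disjoint' p hp q hq hne
  have := C.noncross p hp q hq
  omega

theorem fst_lt_of_snd_mem_Ioo {p q : ℕ × ℕ} (hp : p ∈ C.cups) (hq : q ∈ C.cups)
    (h₁ : p.1 < q.2) (h₂ : q.2 < p.2) : p.1 < q.1 := by
  have hne : p ≠ q := fun h => by subst h; omega
  have := C.disjoint' p hp q hq hne
  have := C.noncross q hq p hp
  omega

def IntervalTiled (C : CrossinglessMatching n) (a b : ℕ) : Prop :=
  ∀ m, a < m → m < b → ∃ q ∈ C.cups, a < q.1 ∧ q.2 < b ∧ (m = q.1 ∨ m = q.2)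

theorem intervalTiled_of_mem {p : ℕ × ℕ} (hp : p ∈ C.cups) : C.IntervalTiled p.1 p.2 := by
  intro m hm₁ hm₂
  obtain ⟨q, hq, hmq | hmq⟩ := C.rays_outside p hp m hm₁ hm₂
  · subst hmq
    exact ⟨q, hq, hm₁, snd_lt_of_fst_mem_Ioo hp hq hm₁ hm₂, Or.inl rfl⟩
  · subst hmq
    exact ⟨q, hq, fst_lt_of_snd_mem_Ioo hp hq hm₁ hm₂, hm₂, Or.inr rfl⟩

theorem IntervalTiled.tail {a b : ℕ} {q : ℕ × ℕ} (h : C.IntervalTiled a b) (hq : q ∈ C.cups)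
    (hq₁ : q.1 = a + 1) : C.IntervalTiled q.2 b := by
  intro m hm₁ hm₂
  have := C.mem_range q hq
  obtain ⟨q', hq', ha, hb, hm⟩ := h m (by omega) hm₂
  refine ⟨q', hq', ?_, hb, hm⟩
  by_contra! hle
  have hne : q ≠ q' := fun h => by subst h; omega
  have := C.disjoint' q hq q' hq' hne
  have := snd_lt_of_fst_mem_Ioo hq hq'
  have := C.mem_range q' hq'
  omega

theorem simRel_of_intervalTiled {a b : ℕ} (hab : a < b) (h : C.IntervalTiled a b) :
    simRel n C a (b - 1) := by
  obtain rfl | hlt := (show b = a + 1 ∨ a + 1 < b by omega)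
  · exact Relation.EqvGen.refl a
  obtain ⟨q, hq, ha, hb, hm⟩ := h (a + 1) (by omega) hlt
  have hq₂ : q.1 < q.2 := (C.mem_range q hq).2.1
  have hq₁ : q.1 = a + 1 := by omega
  have hstep : simRel n C a q.2 := Relation.EqvGen.rel _ _ ⟨q, hq, hq₁, rfl⟩
  exact hstep.trans _ _ _ (simRel_of_intervalTiled (by omega) (h.tail hq hq₁))
termination_by b - a

theorem simRel_snd_fst_sub_one {p : ℕ × ℕ} (hp : p ∈ C.cups) : simRel n C p.2 (p.1 - 1) :=
  .symm _ _ (.rel _ _ ⟨p, hp, by have := C.mem_range p hp; omega, rfl⟩)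

theorem simRel_fst_snd_sub_one {p : ℕ × ℕ} (hp : p ∈ C.cups) : simRel n C p.1 (p.2 - 1) :=
  simRel_of_intervalTiled (C.mem_range p hp).2.1 (intervalTiled_of_mem hp)

end CrossinglessMatching

theorem cup_equivalences_general (n : ℕ) (C : CrossinglessMatching n)
    (p : ℕ × ℕ) (hp : p ∈ C.cups) :
    simRel n C p.2 (p.1 - 1) ∧ simRel n C p.1 (p.2 - 1) :=
  ⟨CrossinglessMatching.simRel_snd_fst_sub_one hp,
    CrossinglessMatching.simRel_fst_snd_sub_one hp⟩

/-- If `{a, b}` is a cup of `C` with `a < b`, then `b ∼_C a - 1` and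
`a ∼_C b - 1`. -/
theorem cup_equivalences (n : ℕ) (hn : 1 ≤ n) (C : CrossinglessMatching n)
    (p : ℕ × ℕ) (hp : p ∈ C.cups) :
    simRel n C p.2 (p.1 - 1) ∧ simRel n C p.1 (p.2 - 1) :=
  cup_equivalences_general n C p hp

end Springer
end

section
/- Let C and D be crossingless matchings on {1,…,n}. The set of minimal elements of the equivalence classes of ≈_{C,D} on {0,1,…,n} consists of 0 together with exactly the leftmost vertex of each circle and the leftmost vertex of each line of the glued diagram D̄C. -/
open Module

/-!
Think of `0, 1, …, n` as the gaps around the points `1, …, n`: gap `u - 1` lies just left of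
the point `u` and gap `u` just right of it.

For a cup `(i, j)` the outer gaps `i - 1` and `j` are related by a generator of `∼`, and the
inner gaps `i` and `j - 1` are `∼`-related because the points strictly between them are matched
among themselves. Hence the points having a neighbouring gap in a given `≈`-class form a union of
components of the glued diagram; so if the gap `m > 0` is minimal in its class, the point `m` lies
left of every other point of its component.

Conversely, a generator `a ∼ σ(a+1)` passes over the points `a+1, …, σ(a+1)`, which are matched
among themselves, so the parity of the number of points of a fixed component lying left of a gap
is a `≈`-invariant. For the leftmost point `m` of a component this number is `1` at the gap `m`
and `0` at every gap left of it.
-/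

theorem Finset.even_card_of_involution {α : Type*} [LinearOrder α] {s : Finset α}
    {f : α → α} (hmaps : ∀ a ∈ s, f a ∈ s) (hinv : ∀ a ∈ s, f (f a) = a)
    (hne : ∀ a ∈ s, f a ≠ a) : Even s.card := by
  have hswap : (s.filter fun a => a < f a).card = (s.filter fun a => ¬ a < f a).card := by
    refine Finset.card_nbij' f f ?_ ?_ ?_ ?_ <;> intro a ha <;>
      simp only [Finset.coe_filter, Set.mem_ofPred_eq] at ha ⊢
    · refine ⟨hmaps a ha.1, ?_⟩
      rw [hinv a ha.1]
      exact ha.2.le.not_gt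
    · refine ⟨hmaps a ha.1, ?_⟩
      rw [hinv a ha.1]
      exact lt_of_le_of_ne (not_lt.1 ha.2) (hne a ha.1)
    · exact hinv a ha.1
    · exact hinv a ha.1
  rw [← Finset.card_filter_add_card_filter_not (fun a => a < f a), hswap]
  exact ⟨_, rfl⟩

namespace Springer

namespace CrossinglessMatching

variable {n : ℕ} (E : CrossinglessMatching n)

lemma eq_of_mem_cups {q q' : ℕ × ℕ} (hq : q ∈ E.cups) (hq' : q' ∈ E.cups) {p : ℕ}
    (h : p = q.1 ∨ p = q.2) (h' : p = q'.1 ∨ p = q'.2) : q = q' := by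
  by_contra hne
  obtain ⟨d1, d2, d3, d4⟩ := E.disjoint' q hq q' hq' hne
  rcases h with rfl | rfl <;> rcases h' with h' | h'
  exacts [d1 h', d2 h', d3 h', d4 h']

lemma lt_of_cupRel {a b : ℕ} (h : cupRel n E a b) : a < b := by
  obtain ⟨q, hq, h1, rfl⟩ := h
  have := (E.mem_range q hq).2.1
  omega

lemma exists_cup_strictly_inside {i j p : ℕ} (hij : (i, j) ∈ E.cups) (hi : i < p) (hj : p < j) :
    ∃ q ∈ E.cups, (p = q.1 ∨ p = q.2) ∧ i < q.1 ∧ q.2 < j := by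
  obtain ⟨q, hq, hpq⟩ := E.rays_outside (i, j) hij p hi hj
  have hq_lt := (E.mem_range q hq).2.1
  have hne : (i, j) ≠ q := by
    rintro rfl
    rcases hpq with h | h <;> simp only at h <;> omega
  obtain ⟨d1, -, -, d4⟩ := E.disjoint' (i, j) hij q hq hne
  have h1 := E.noncross q hq (i, j) hij
  have h2 := E.noncross (i, j) hij q hq
  simp only at d1 d4 h1 h2
  refine ⟨q, hq, hpq, ?_, ?_⟩ <;> rcases hpq with rfl | rfl <;> omega

lemma exists_cup_inside {i j p : ℕ} (hij : (i, j) ∈ E.cups) (hi : i ≤ p) (hj : p ≤ j) :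
    ∃ q ∈ E.cups, (p = q.1 ∨ p = q.2) ∧ i ≤ q.1 ∧ q.2 ≤ j := by
  rcases hi.eq_or_lt with rfl | hi
  · exact ⟨_, hij, Or.inl rfl, le_rfl, le_rfl⟩
  rcases hj.eq_or_lt with rfl | hj
  · exact ⟨_, hij, Or.inr rfl, le_rfl, le_rfl⟩
  obtain ⟨q, hq, hpq, h1, h2⟩ := E.exists_cup_strictly_inside hij hi hj
  exact ⟨q, hq, hpq, h1.le, h2.le⟩

lemma simRel_of_tiled {a b : ℕ} (hab : a ≤ b)
    (htile : ∀ p, a < p → p ≤ b → ∃ q ∈ E.cups, (p = q.1 ∨ p = q.2) ∧ a < q.1 ∧ q.2 ≤ b) :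
    simRel n E a b := by
  induction hd : b - a using Nat.strong_induction_on generalizing a with
  | _ d ih =>
  rcases hab.eq_or_lt with rfl | hlt
  · exact Relation.EqvGen.refl a
  obtain ⟨q, hq, hpq, hq1, hq2⟩ := htile (a + 1) a.lt_succ_self hlt
  have hq_lt := (E.mem_range q hq).2.1
  have hq1' : q.1 = a + 1 := by omega
  have hstep : simRel n E a q.2 := Relation.EqvGen.rel _ _ ⟨q, hq, hq1', rfl⟩
  refine hstep.trans _ _ _ (ih (b - q.2) (by omega) hq2 (fun p hp hpb => ?_) rfl)
  obtain ⟨q', hq', hpq', ha', hb'⟩ := htile p (by omega) hpb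
  refine ⟨q', hq', hpq', ?_, hb'⟩
  have hne : q ≠ q' := by
    rintro rfl
    omega
  obtain ⟨d1, -, d3, -⟩ := E.disjoint' q hq q' hq' hne
  have hcross := E.noncross q hq q' hq'
  have hq'_lt := (E.mem_range q' hq').2.1
  rcases hpq' with rfl | rfl <;> omega

lemma simRel_inner {i j : ℕ} (hij : (i, j) ∈ E.cups) : simRel n E i (j - 1) := by
  have hij' := (E.mem_range _ hij).2.1
  refine E.simRel_of_tiled (by omega) fun p hi hj => ?_
  obtain ⟨q, hq, hpq, h1, h2⟩ := E.exists_cup_strictly_inside hij hi (by omega)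
  exact ⟨q, hq, hpq, h1, by omega⟩

/-- The partner map `σ`, extended by the identity on rays. -/
noncomputable def partner (p : ℕ) : ℕ :=
  if h : ∃ q ∈ E.cups, p = q.1 ∨ p = q.2 then
    if p = h.choose.1 then h.choose.2 else h.choose.1
  else p

lemma partner_of_mem_cups {q : ℕ × ℕ} (hq : q ∈ E.cups) {p : ℕ} (hp : p = q.1 ∨ p = q.2) :
    E.partner p = if p = q.1 then q.2 else q.1 := by
  have hex : ∃ q' ∈ E.cups, p = q'.1 ∨ p = q'.2 := ⟨q, hq, hp⟩
  rw [partner, dif_pos hex, E.eq_of_mem_cups hex.choose_spec.1 hq hex.choose_spec.2 hp]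

lemma partner_fst {q : ℕ × ℕ} (hq : q ∈ E.cups) : E.partner q.1 = q.2 := by
  rw [E.partner_of_mem_cups hq (Or.inl rfl), if_pos rfl]

lemma partner_snd {q : ℕ × ℕ} (hq : q ∈ E.cups) : E.partner q.2 = q.1 := by
  rw [E.partner_of_mem_cups hq (Or.inr rfl), if_neg (E.mem_range q hq).2.1.ne']

lemma partner_involutive : Function.Involutive E.partner := fun p => by
  by_cases h : ∃ q ∈ E.cups, p = q.1 ∨ p = q.2
  · obtain ⟨q, hq, rfl | rfl⟩ := h
    · rw [E.partner_fst hq, E.partner_snd hq]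
    · rw [E.partner_snd hq, E.partner_fst hq]
  · have hp : E.partner p = p := dif_neg h
    rw [hp, hp]

lemma even_card_filter_Ioc_of_cupRel {P : ℕ → Prop} [DecidablePred P]
    (hP : ∀ q ∈ E.cups, P q.1 ↔ P q.2) {a b : ℕ} (h : cupRel n E a b) :
    Even ((Finset.Ioc a b).filter P).card := by
  obtain ⟨c, hc, hc1, rfl⟩ := h
  have hc' : (a + 1, c.2) ∈ E.cups := hc1 ▸ hc
  have hcup : ∀ p ∈ (Finset.Ioc a c.2).filter P, ∃ q ∈ E.cups, (p = q.1 ∨ p = q.2) ∧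
      q.1 ∈ (Finset.Ioc a c.2).filter P ∧ q.2 ∈ (Finset.Ioc a c.2).filter P := by
    intro p hp
    simp only [Finset.mem_filter, Finset.mem_Ioc] at hp ⊢
    obtain ⟨q, hq, hpq, h1, h2⟩ := E.exists_cup_inside hc' (by omega) hp.1.2
    have hq_lt := (E.mem_range q hq).2.1
    refine ⟨q, hq, hpq, ⟨⟨by omega, by omega⟩, ?_⟩, ⟨⟨by omega, h2⟩, ?_⟩⟩ <;>
      rcases hpq with rfl | rfl
    exacts [hp.2, (hP q hq).2 hp.2, (hP q hq).1 hp.2, hp.2]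
  refine Finset.even_card_of_involution (f := E.partner) (fun p hp => ?_)
    (fun p _ => E.partner_involutive p) (fun p hp => ?_) <;>
    obtain ⟨q, hq, rfl | rfl, h1, h2⟩ := hcup p hp
  · rwa [E.partner_fst hq]
  · rwa [E.partner_snd hq]
  · exact (E.partner_fst hq).trans_ne (E.mem_range q hq).2.1.ne'
  · exact (E.partner_snd hq).trans_ne (E.mem_range q hq).2.1.ne

end CrossinglessMatching

section Glued

variable {n : ℕ} {C D : CrossinglessMatching n}

lemma conn_le_iff {a b : ℕ} (h : Conn n C D a b) : a ≤ n ↔ b ≤ n := by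
  induction h with
  | rel x y hxy =>
    rcases hxy with h | h | h | h <;>
      (first | have := C.mem_range _ h | have := D.mem_range _ h) <;>
      (simp only at this; omega)
  | refl => rfl
  | symm _ _ _ ih => exact ih.symm
  | trans _ _ _ _ _ ih1 ih2 => exact ih1.trans ih2

lemma simRel_le_approxRel_left : simRel n C ≤ approxRel n C D :=
  Relation.EqvGen.mono fun _ _ => Or.inl

lemma simRel_le_approxRel_right : simRel n D ≤ approxRel n C D :=
  Relation.EqvGen.mono fun _ _ => Or.inr

def Touches (n : ℕ) (C D : CrossinglessMatching n) (m u : ℕ) : Prop :=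
  approxRel n C D m (u - 1) ∨ approxRel n C D m u

lemma touches_iff_of_mem_cups {E : CrossinglessMatching n} (hE : simRel n E ≤ approxRel n C D)
    {i j : ℕ} (hij : (i, j) ∈ E.cups) (m : ℕ) : Touches n C D m i ↔ Touches n C D m j := by
  have hi := (E.mem_range _ hij).1
  have houter : approxRel n C D (i - 1) j :=
    hE _ _ (Relation.EqvGen.rel _ _ ⟨(i, j), hij, by omega, rfl⟩)
  have hinner : approxRel n C D i (j - 1) := hE _ _ (E.simRel_inner hij)
  constructor
  · rintro (h | h)
    · exact Or.inr (h.trans _ _ _ houter)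
    · exact Or.inl (h.trans _ _ _ hinner)
  · rintro (h | h)
    · exact Or.inr (h.trans _ _ _ hinner.symm)
    · exact Or.inl (h.trans _ _ _ houter.symm)

lemma touches_iff_of_conn {a b : ℕ} (h : Conn n C D a b) (m : ℕ) :
    Touches n C D m a ↔ Touches n C D m b := by
  induction h with
  | rel x y hxy =>
    rcases hxy with h | h | h | h
    · exact touches_iff_of_mem_cups simRel_le_approxRel_left h m
    · exact (touches_iff_of_mem_cups simRel_le_approxRel_left h m).symm
    · exact touches_iff_of_mem_cups simRel_le_approxRel_right h m
    · exact (touches_iff_of_mem_cups simRel_le_approxRel_right h m).symm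
  | refl => rfl
  | symm _ _ _ ih => exact ih.symm
  | trans _ _ _ _ _ ih1 ih2 => exact ih1.trans ih2

lemma card_filter_Ioc_mod_two_eq_of_approxRel {P : ℕ → Prop} [DecidablePred P]
    (hC : ∀ q ∈ C.cups, P q.1 ↔ P q.2) (hD : ∀ q ∈ D.cups, P q.1 ↔ P q.2) {a b : ℕ}
    (h : approxRel n C D a b) :
    ((Finset.Ioc 0 a).filter P).card % 2 = ((Finset.Ioc 0 b).filter P).card % 2 := by
  induction h with
  | rel a b hab =>
    obtain ⟨hlt, k, hk⟩ : a < b ∧ Even ((Finset.Ioc a b).filter P).card := by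
      rcases hab with h | h
      exacts [⟨C.lt_of_cupRel h, C.even_card_filter_Ioc_of_cupRel hC h⟩,
        ⟨D.lt_of_cupRel h, D.even_card_filter_Ioc_of_cupRel hD h⟩]
    rw [← Finset.Ioc_union_Ioc_eq_Ioc a.zero_le hlt.le, Finset.filter_union,
      Finset.card_union_of_disjoint
        (Finset.disjoint_filter_filter (Finset.Ioc_disjoint_Ioc_of_le le_rfl))]
    omega
  | refl => rfl
  | symm _ _ _ ih => exact ih.symm
  | trans _ _ _ _ _ ih1 ih2 => exact ih1.trans ih2

lemma le_of_isLeftmost_of_approxRel {m j : ℕ} (hm : IsLeftmost n C D m)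
    (h : approxRel n C D m j) : m ≤ j := by
  classical
  obtain ⟨hm1, -, hleft⟩ := hm
  by_contra! hjm
  have hadj : ∀ {x y}, Adj n C D x y → (Conn n C D x m ↔ Conn n C D y m) := fun hxy =>
    ⟨(Relation.EqvGen.rel _ _ hxy).symm.trans _ _ _, (Relation.EqvGen.rel _ _ hxy).trans _ _ _⟩
  have hpar := card_filter_Ioc_mod_two_eq_of_approxRel (P := (Conn n C D · m))
    (fun q hq => hadj (Or.inl hq)) (fun q hq => hadj (Or.inr (Or.inr (Or.inl hq)))) h
  have hself : (Finset.Ioc 0 m).filter (Conn n C D · m) = {m} := by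
    ext p
    simp only [Finset.mem_filter, Finset.mem_Ioc, Finset.mem_singleton]
    refine ⟨fun ⟨⟨hp0, hpm⟩, hc⟩ => le_antisymm hpm (hleft p hp0 hc), ?_⟩
    rintro rfl
    exact ⟨⟨hm1, le_rfl⟩, Relation.EqvGen.refl p⟩
  have hempty : (Finset.Ioc 0 j).filter (Conn n C D · m) = ∅ :=
    Finset.filter_eq_empty_iff.2 fun p hp hc => by
      rw [Finset.mem_Ioc] at hp
      exact absurd (hleft p hp.1 hc) (by omega)
  rw [hself, hempty] at hpar
  simp at hpar

end Glued

theorem minimal_representatives_general (n : ℕ) (C D : CrossinglessMatching n)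
    (m : ℕ) (hm : m ≤ n) :
    (∀ j, j ≤ n → approxRel n C D m j → m ≤ j) ↔ (m = 0 ∨ IsLeftmost n C D m) := by
  constructor
  · intro hmin
    rcases Nat.eq_zero_or_pos m with rfl | hpos
    · exact Or.inl rfl
    refine Or.inr ⟨hpos, hm, fun u hu hconn => ?_⟩
    have hun : u ≤ n := (conn_le_iff hconn).2 hm
    rcases (touches_iff_of_conn hconn m).2 (Or.inr (Relation.EqvGen.refl m)) with h | h
    · have := hmin (u - 1) (by omega) h
      omega
    · exact hmin u hun h
  · rintro (rfl | hleft) j - hj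
    · exact Nat.zero_le j
    · exact le_of_isLeftmost_of_approxRel hleft hj

/-- The minimal elements of the equivalence classes of `≈_{C,D}` on
`{0, 1, …, n}` are `0` together with exactly the leftmost vertices of the circles and
of the lines (i.e. of the connected components) of the glued diagram `D̄C`. -/
theorem minimal_representatives (n : ℕ) (hn : 1 ≤ n) (C D : CrossinglessMatching n)
    (m : ℕ) (hm : m ≤ n) :
    (∀ j, j ≤ n → approxRel n C D m j → m ≤ j) ↔ (m = 0 ∨ IsLeftmost n C D m) :=
  minimal_representatives_general n C D m hm

end Springer
end

section
/- Let w and w' be weight sequences with associated crossingless matchings C = m(w) and D = m(w'). The number of orientations of the glued diagram D̄C is: zero if some line of D̄C is not orientable (i.e. admits no labeling of its vertices by ∧,∨ that is opposite across every edge, agrees with w at every vertex that is a ray of C, and agrees with w' at every vertex that is a ray of D); equal to 2^c if every line of D̄C is orientable, where c is the number of circles of D̄C; and in particular equal to one exactly when every line is orientable and there are no circles. -/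
open Module

namespace Springer

/-!
Every cup of a crossingless matching joins points of opposite parity (the points inside it are
paired off by the cups nested in it), so the glued diagram `D̄C` is bipartite. Hence a labelling
that flips across every edge is determined on a component by its value at any one vertex, and on
a circle every value there is realised by the parity labelling. On a line that value is forced by
a ray, while on a circle it is free: orientations correspond to labellings of the leftmost
vertices of the circles. The weight count is automatic: an orientation agrees with `w` on the rays
of `C = m(w)` and, like `w`, carries exactly one `∨` on every cup of `C`.
-/

section

open Finset Relation

variable {n : ℕ}

instance (C : CrossinglessMatching n) (m : ℕ) : Decidable (Matched n C m) := by
  unfold Matched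
  infer_instance

def FlipsOnCups (C : CrossinglessMatching n) (v : Fin n → Bool) : Prop :=
  ∀ p ∈ C.cups, ∀ (h1 : p.1 - 1 < n) (h2 : p.2 - 1 < n), v ⟨p.1 - 1, h1⟩ ≠ v ⟨p.2 - 1, h2⟩

theorem CrossinglessMatching.mod_two_ne (C : CrossinglessMatching n) {p : ℕ × ℕ}
    (hp : p ∈ C.cups) : p.1 % 2 ≠ p.2 % 2 := by
  have hr := C.mem_range p hp
  set T := C.cups.filter fun q => p.1 < q.1 ∧ q.2 < p.2
  have hIoo : Ioo p.1 p.2 = T.biUnion fun q => {q.1, q.2} := by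
    ext m
    simp only [T, mem_Ioo, mem_biUnion, mem_filter, mem_insert, mem_singleton]
    constructor
    · rintro ⟨h1, h2⟩
      obtain ⟨q, hq, hm⟩ := C.rays_outside p hp m h1 h2
      have hqr := C.mem_range q hq
      have hd := C.disjoint' p hp q hq (by rintro rfl; omega)
      have := C.noncross p hp q hq
      have := C.noncross q hq p hp
      exact ⟨q, ⟨hq, by omega, by omega⟩, hm⟩
    · rintro ⟨q, ⟨hq, h1, h2⟩, hm⟩
      have := C.mem_range q hq
      omega
  have hdisj : (T : Set (ℕ × ℕ)).PairwiseDisjoint fun q => ({q.1, q.2} : Finset ℕ) := by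
    intro q hq q' hq' hne
    have hd := C.disjoint' q (mem_filter.1 hq).1 q' (mem_filter.1 hq').1 hne
    simp only [Function.onFun, disjoint_insert_left, disjoint_insert_right,
      disjoint_singleton, mem_insert, mem_singleton]
    omega
  have hcard : #(Ioo p.1 p.2) = 2 * #T := by
    rw [hIoo, card_biUnion hdisj, sum_congr rfl fun q hq => card_pair ?_, sum_const,
      smul_eq_mul, mul_comm]
    have := C.mem_range q (mem_filter.1 hq).1
    omega
  rw [Nat.card_Ioo] at hcard
  omega

section WeightCount

variable {C : CrossinglessMatching n} {u : Fin n → Bool}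

lemma card_filter_true_and_matched (hu : FlipsOnCups C u) :
    #{i | u i = true ∧ Matched n C (i.val + 1)} = #C.cups := by
  have hcup : ∀ p ∈ C.cups, #{i | (i.val + 1 = p.1 ∨ i.val + 1 = p.2) ∧ u i = true} = 1 := by
    intro p hp
    obtain ⟨h1, h12, h2⟩ := C.mem_range p hp
    have hends : ({i | i.val + 1 = p.1 ∨ i.val + 1 = p.2} : Finset (Fin n)) =
        {⟨p.1 - 1, by omega⟩, ⟨p.2 - 1, by omega⟩} := by
      ext i
      simp only [mem_filter, mem_univ, true_and, mem_insert, mem_singleton, Fin.ext_iff]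
      omega
    have hne := hu p hp (by omega) (by omega)
    rw [← filter_filter, hends]
    cases ha : u ⟨p.1 - 1, by omega⟩ <;> cases hb : u ⟨p.2 - 1, by omega⟩ <;>
      simp_all [filter_insert, filter_singleton]
  have hdisj : (C.cups : Set (ℕ × ℕ)).PairwiseDisjoint
      fun p => ({i | (i.val + 1 = p.1 ∨ i.val + 1 = p.2) ∧ u i = true} : Finset (Fin n)) := by
    intro p hp q hq hpq
    have hd := C.disjoint' p hp q hq hpq
    simp only [Function.onFun, disjoint_left, mem_filter, mem_univ, true_and]
    omega
  calc #{i | u i = true ∧ Matched n C (i.val + 1)}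
      = #(C.cups.biUnion fun p => {i | (i.val + 1 = p.1 ∨ i.val + 1 = p.2) ∧ u i = true}) := by
        congr 1
        ext i
        simp only [mem_filter, mem_univ, true_and, mem_biUnion]
        exact ⟨fun ⟨h, p, hp, hm⟩ => ⟨p, hp, hm, h⟩, fun ⟨p, hp, hm, h⟩ => ⟨h, p, hp, hm⟩⟩
    _ = #C.cups := by rw [card_biUnion hdisj, sum_congr rfl hcup, card_eq_sum_ones]

lemma card_filter_true_eq (hu : FlipsOnCups C u) :
    #{i | u i = true} = #C.cups + #{i | u i = true ∧ ¬ Matched n C (i.val + 1)} := by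
  rw [← card_filter_true_and_matched hu, ← filter_filter, ← filter_filter,
    card_filter_add_card_filter_not]

lemma IsWeightSeq.of_eq_of_not_matched {k : ℕ} {w : Fin n → Bool} (hw : IsWeightSeq n k w)
    (hwC : FlipsOnCups C w) (huC : FlipsOnCups C u)
    (hray : ∀ i : Fin n, ¬ Matched n C (i.val + 1) → u i = w i) : IsWeightSeq n k u := by
  unfold IsWeightSeq at hw ⊢
  rw [card_filter_true_eq huC, ← hw, card_filter_true_eq hwC]
  congr 2
  ext i
  simp only [mem_filter, mem_univ, true_and, and_congr_left_iff]
  intro hi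
  rw [hray i hi]

end WeightCount

theorem eq_iff_eq_of_eqvGen {α : Type*} {r : α → α → Prop} {g g' : α → Bool}
    (hg : ∀ a b, r a b → g a ≠ g b) (hg' : ∀ a b, r a b → g' a ≠ g' b) {a b : α}
    (h : EqvGen r a b) : g a = g' a ↔ g b = g' b := by
  induction h with
  | rel a b hab =>
    rw [Bool.eq_not_of_ne (hg a b hab).symm, Bool.eq_not_of_ne (hg' a b hab).symm,
      Bool.not_inj_iff]
  | refl => rfl
  | symm _ _ _ ih => exact ih.symm
  | trans _ _ _ _ _ ih₁ ih₂ => exact ih₁.trans ih₂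

section GluedDiagram

variable {C D : CrossinglessMatching n} {a b m : ℕ}

lemma Adj.bounds (h : Adj n C D a b) : (1 ≤ a ∧ a ≤ n) ∧ (1 ≤ b ∧ b ≤ n) := by
  rcases h with h | h | h | h
  all_goals
    first
    | have := C.mem_range _ h
    | have := D.mem_range _ h
    dsimp only at this
    omega

lemma Adj.mod_two_ne (h : Adj n C D a b) : a % 2 ≠ b % 2 := by
  rcases h with h | h | h | h
  exacts [C.mod_two_ne h, (C.mod_two_ne h).symm, D.mod_two_ne h, (D.mod_two_ne h).symm]

lemma Conn.symm (h : Conn n C D a b) : Conn n C D b a := EqvGen.symm _ _ h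

lemma Conn.trans {c : ℕ} (h : Conn n C D a b) (h' : Conn n C D b c) : Conn n C D a c :=
  EqvGen.trans _ _ _ h h'

lemma Conn.eq_or_bounds (h : Conn n C D a b) :
    a = b ∨ (1 ≤ a ∧ a ≤ n) ∧ (1 ≤ b ∧ b ≤ n) := by
  induction h with
  | rel x y hxy => exact Or.inr hxy.bounds
  | refl => exact Or.inl rfl
  | symm _ _ _ ih => omega
  | trans _ _ _ _ _ ih₁ ih₂ => omega

lemma isCircleComp_congr (h : Conn n C D a b) :
    IsCircleComp n C D a ↔ IsCircleComp n C D b :=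
  ⟨fun hc u hu => hc u (hu.trans h.symm), fun hc u hu => hc u (hu.trans h)⟩

open Classical in
/-- The leftmost vertex of the component of `m` in `D̄C`; junk value `m` for `m = 0`. -/
noncomputable def leftmost (n : ℕ) (C D : CrossinglessMatching n) (m : ℕ) : ℕ :=
  if h : ∃ u, 1 ≤ u ∧ Conn n C D u m then Nat.find h else m

lemma leftmost_le {u : ℕ} (hu : 1 ≤ u) (hum : Conn n C D u m) : leftmost n C D m ≤ u := by
  classical
  have h : ∃ u, 1 ≤ u ∧ Conn n C D u m := ⟨u, hu, hum⟩
  rw [leftmost, dif_pos h]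
  exact Nat.find_min' h ⟨hu, hum⟩

lemma one_le_leftmost_and_conn (hm : 1 ≤ m) :
    1 ≤ leftmost n C D m ∧ Conn n C D (leftmost n C D m) m := by
  classical
  have h : ∃ u, 1 ≤ u ∧ Conn n C D u m := ⟨m, hm, EqvGen.refl m⟩
  rw [leftmost, dif_pos h]
  exact Nat.find_spec h

lemma isLeftmost_leftmost (h1 : 1 ≤ m) (h2 : m ≤ n) : IsLeftmost n C D (leftmost n C D m) :=
  have hℓ := one_le_leftmost_and_conn (C := C) (D := D) h1
  ⟨hℓ.1, (leftmost_le h1 (EqvGen.refl m)).trans h2,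
    fun _ hu huℓ => leftmost_le hu (huℓ.trans hℓ.2)⟩

lemma leftmost_congr (h : Conn n C D a b) : leftmost n C D a = leftmost n C D b := by
  rcases h.eq_or_bounds with rfl | ⟨⟨ha, -⟩, ⟨hb, -⟩⟩
  · rfl
  · have hℓa := one_le_leftmost_and_conn (C := C) (D := D) ha
    have hℓb := one_le_leftmost_and_conn (C := C) (D := D) hb
    exact le_antisymm (leftmost_le hℓb.1 (hℓb.2.trans h.symm))
      (leftmost_le hℓa.1 (hℓa.2.trans h))

lemma IsLeftmost.leftmost_eq (hm : IsLeftmost n C D m) : leftmost n C D m = m :=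
  have hℓ := one_le_leftmost_and_conn (C := C) (D := D) hm.1
  le_antisymm (leftmost_le hm.1 (EqvGen.refl m)) (hm.2.2 _ hℓ.1 hℓ.2)

end GluedDiagram

section Orientations

variable {C D : CrossinglessMatching n} {w w' : Fin n → Bool}

/-- An orientation of `D̄C` without the weight count, labelling the vertices `1, …, n`
by a function on `ℕ`. -/
def IsOrientation (n : ℕ) (w w' : Fin n → Bool) (C D : CrossinglessMatching n)
    (g : ℕ → Bool) : Prop :=
  (∀ i j, Adj n C D i j → g i ≠ g j) ∧
  (∀ i, 1 ≤ i → i ≤ n → ¬ Matched n C i → ∀ h : i - 1 < n, g i = w ⟨i - 1, h⟩) ∧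
  (∀ i, 1 ≤ i → i ≤ n → ¬ Matched n D i → ∀ h : i - 1 < n, g i = w' ⟨i - 1, h⟩)

/-- The witnesses of `ComponentOrientable n w w' C D r`. -/
def OrientsComponent (n : ℕ) (w w' : Fin n → Bool) (C D : CrossinglessMatching n) (r : ℕ)
    (g : ℕ → Bool) : Prop :=
  (∀ i j, Conn n C D i r → Adj n C D i j → g i ≠ g j) ∧
  (∀ i, Conn n C D i r → 1 ≤ i → i ≤ n → ¬ Matched n C i →
    ∀ h : i - 1 < n, g i = w ⟨i - 1, h⟩) ∧
  (∀ i, Conn n C D i r → 1 ≤ i → i ≤ n → ¬ Matched n D i →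
    ∀ h : i - 1 < n, g i = w' ⟨i - 1, h⟩)

lemma IsOrientation.componentOrientable {g : ℕ → Bool} (hg : IsOrientation n w w' C D g)
    (r : ℕ) : ComponentOrientable n w w' C D r :=
  ⟨g, fun i j _ => hg.1 i j, fun i _ => hg.2.1 i, fun i _ => hg.2.2 i⟩

lemma orientsComponent_parity {r : ℕ} (hr : IsCircleComp n C D r) (b : Bool) :
    OrientsComponent n w w' C D r fun m => if m % 2 = r % 2 then b else !b := by
  refine ⟨fun i j _ hij => ?_, fun i hi _ _ hC => absurd (hr i hi).1 hC,
    fun i hi _ _ hD => absurd (hr i hi).2 hD⟩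
  have := hij.mod_two_ne
  dsimp only
  split_ifs <;> first | omega | cases b <;> decide

lemma IsOrientation.eq_of_eq_on_circles {g g' : ℕ → Bool} (hg : IsOrientation n w w' C D g)
    (hg' : IsOrientation n w w' C D g')
    (hcirc : ∀ x, IsLeftmost n C D x → IsCircleComp n C D x → g x = g' x)
    {m : ℕ} (h1 : 1 ≤ m) (h2 : m ≤ n) : g m = g' m := by
  suffices ∃ a, Conn n C D a m ∧ g a = g' a by
    obtain ⟨a, ham, hga⟩ := this
    exact (eq_iff_eq_of_eqvGen hg.1 hg'.1 ham).1 hga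
  by_cases hc : IsCircleComp n C D m
  · have hℓ := one_le_leftmost_and_conn (C := C) (D := D) h1
    exact ⟨_, hℓ.2, hcirc _ (isLeftmost_leftmost h1 h2) ((isCircleComp_congr hℓ.2).2 hc)⟩
  -- a line contains a ray, where both labellings are prescribed
  obtain ⟨a, ham, ha⟩ : ∃ a, Conn n C D a m ∧ ¬ (Matched n C a ∧ Matched n D a) := by
    simpa [IsCircleComp] using hc
  have ha_mem : 1 ≤ a ∧ a ≤ n := by
    rcases ham.eq_or_bounds with rfl | h
    exacts [⟨h1, h2⟩, h.1]
  refine ⟨a, ham, ?_⟩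
  rcases not_and_or.1 ha with hC | hD
  · exact (hg.2.1 a ha_mem.1 ha_mem.2 hC (by omega)).trans
      (hg'.2.1 a ha_mem.1 ha_mem.2 hC (by omega)).symm
  · exact (hg.2.2 a ha_mem.1 ha_mem.2 hD (by omega)).trans
      (hg'.2.2 a ha_mem.1 ha_mem.2 hD (by omega)).symm

lemma exists_isOrientation
    (H : ∀ v0, 1 ≤ v0 → v0 ≤ n → ¬ IsCircleComp n C D v0 → ComponentOrientable n w w' C D v0)
    (f : ℕ → Bool) :
    ∃ g, IsOrientation n w w' C D g ∧
      ∀ x, IsLeftmost n C D x → IsCircleComp n C D x → g x = f x := by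
  have hcomp : ∀ r, ∃ G : ℕ → Bool, 1 ≤ r → r ≤ n →
      OrientsComponent n w w' C D r G ∧ (IsCircleComp n C D r → G r = f r) := by
    intro r
    by_cases hr : IsCircleComp n C D r
    · exact ⟨_, fun _ _ => ⟨orientsComponent_parity hr (f r), fun _ => if_pos rfl⟩⟩
    by_cases hrn : 1 ≤ r ∧ r ≤ n
    · obtain ⟨G, hG⟩ := H r hrn.1 hrn.2 hr
      exact ⟨G, fun _ _ => ⟨hG, fun h => absurd h hr⟩⟩
    · exact ⟨f, fun h1 h2 => absurd ⟨h1, h2⟩ hrn⟩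
  choose G hG using hcomp
  -- each component is labelled by the labelling chosen for its leftmost vertex
  have hGℓ : ∀ i, 1 ≤ i → i ≤ n →
      OrientsComponent n w w' C D (leftmost n C D i) (G (leftmost n C D i)) := fun i h1 h2 =>
    have hℓ := isLeftmost_leftmost (C := C) (D := D) h1 h2
    (hG _ hℓ.1 hℓ.2.1).1
  refine ⟨fun m => G (leftmost n C D m) m, ⟨fun i j hij => ?_, fun i h1 h2 => ?_,
    fun i h1 h2 => ?_⟩, fun x hx hc => ?_⟩
  · obtain ⟨⟨h1, h2⟩, -⟩ := hij.bounds
    dsimp only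
    rw [← leftmost_congr (EqvGen.rel _ _ hij)]
    exact (hGℓ i h1 h2).1 i j (one_le_leftmost_and_conn h1).2.symm hij
  · exact (hGℓ i h1 h2).2.1 i (one_le_leftmost_and_conn h1).2.symm h1 h2
  · exact (hGℓ i h1 h2).2.2 i (one_le_leftmost_and_conn h1).2.symm h1 h2
  · dsimp only
    rw [hx.leftmost_eq]
    exact (hG x hx.1 hx.2.1).2 hc

end Orientations

section Labellings

variable {C D : CrossinglessMatching n} {w w' v : Fin n → Bool} {g : ℕ → Bool}

lemma apply_eq_of_forall_succ (hgv : ∀ i : Fin n, g (i.val + 1) = v i) {m : ℕ} (hm : 1 ≤ m)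
    (h : m - 1 < n) : g m = v ⟨m - 1, h⟩ := by
  rw [← hgv]
  simp only [Nat.sub_add_cancel hm]

lemma flipsOnCups_iff (hgv : ∀ i : Fin n, g (i.val + 1) = v i) :
    FlipsOnCups C v ↔ ∀ p ∈ C.cups, g p.1 ≠ g p.2 := by
  refine forall₂_congr fun p hp => ?_
  obtain ⟨h1, h12, h2⟩ := C.mem_range p hp
  rw [apply_eq_of_forall_succ hgv h1 (by omega), apply_eq_of_forall_succ hgv (by omega) (by omega)]
  exact ⟨fun h => h _ _, fun h _ _ => h⟩

lemma forall_not_matched_eq_iff (hgv : ∀ i : Fin n, g (i.val + 1) = v i) :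
    (∀ i : Fin n, ¬ Matched n C (i.val + 1) → v i = w i) ↔
      ∀ i, 1 ≤ i → i ≤ n → ¬ Matched n C i → ∀ h : i - 1 < n, g i = w ⟨i - 1, h⟩ := by
  constructor
  · intro hv i h1 _ hM h
    rw [apply_eq_of_forall_succ hgv h1 h]
    exact hv _ (by rwa [Nat.sub_add_cancel h1])
  · intro hg i hM
    rw [← hgv]
    simpa using hg (i.val + 1) (by omega) i.isLt hM (by simp)

lemma adj_ne_iff : (∀ i j, Adj n C D i j → g i ≠ g j) ↔
    (∀ p ∈ C.cups, g p.1 ≠ g p.2) ∧ ∀ p ∈ D.cups, g p.1 ≠ g p.2 := by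
  refine ⟨fun hg => ⟨fun p hp => hg _ _ (Or.inl hp),
    fun p hp => hg _ _ (Or.inr (Or.inr (Or.inl hp)))⟩, fun ⟨hC, hD⟩ i j hij => ?_⟩
  rcases hij with h | h | h | h
  exacts [hC _ h, (hC _ h).symm, hD _ h, (hD _ h).symm]

lemma isOrientation_iff (hgv : ∀ i : Fin n, g (i.val + 1) = v i) :
    IsOrientation n w w' C D g ↔ FlipsOnCups C v ∧ FlipsOnCups D v ∧
      (∀ i : Fin n, ¬ Matched n C (i.val + 1) → v i = w i) ∧
      (∀ i : Fin n, ¬ Matched n D (i.val + 1) → v i = w' i) := by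
  rw [IsOrientation, adj_ne_iff, flipsOnCups_iff hgv, flipsOnCups_iff hgv,
    forall_not_matched_eq_iff hgv, forall_not_matched_eq_iff hgv, and_assoc]

lemma OrientsGlued.isOrientation {k : ℕ} (hv : OrientsGlued n k w w' C D v)
    (hgv : ∀ i : Fin n, g (i.val + 1) = v i) : IsOrientation n w w' C D g :=
  (isOrientation_iff hgv).2 hv.2

lemma IsOrientation.orientsGlued {k : ℕ} (hg : IsOrientation n w w' C D g)
    (hgv : ∀ i : Fin n, g (i.val + 1) = v i) (hw : IsWeightSeq n k w)
    (hwC : FlipsOnCups C w) : OrientsGlued n k w w' C D v := by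
  obtain ⟨hC, hD, hrC, hrD⟩ := (isOrientation_iff hgv).1 hg
  exact ⟨hw.of_eq_of_not_matched hwC hC hrC, hC, hD, hrC, hrD⟩

/-- Vertex `m` of the diagram carries the label of the index `m - 1 : Fin n`. -/
def vertexLabel (v : Fin n → Bool) (m : ℕ) : Bool :=
  if h : m - 1 < n then v ⟨m - 1, h⟩ else false

lemma vertexLabel_succ (v : Fin n → Bool) (i : Fin n) : vertexLabel v (i.val + 1) = v i := by
  simp [vertexLabel]

lemma vertexLabel_eq (hgv : ∀ i : Fin n, g (i.val + 1) = v i) {m : ℕ} (h1 : 1 ≤ m)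
    (h2 : m ≤ n) : vertexLabel v m = g m := by
  rw [vertexLabel, dif_pos (by omega), apply_eq_of_forall_succ hgv h1]

end Labellings

section Counting

variable {k : ℕ} {C D : CrossinglessMatching n} {w w' : Fin n → Bool}

lemma card_orientsGlued_eq_zero {r : ℕ} (hr : ¬ ComponentOrientable n w w' C D r) :
    Nat.card {v : Fin n → Bool // OrientsGlued n k w w' C D v} = 0 :=
  have : IsEmpty {v : Fin n → Bool // OrientsGlued n k w w' C D v} :=
    ⟨fun v => hr ((v.2.isOrientation (vertexLabel_succ v.1)).componentOrientable r)⟩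
  Nat.card_of_isEmpty

lemma card_orientsGlued_eq_two_pow (hw : IsWeightSeq n k w) (hwC : FlipsOnCups C w)
    (H : ∀ v0, 1 ≤ v0 → v0 ≤ n → ¬ IsCircleComp n C D v0 → ComponentOrientable n w w' C D v0) :
    Nat.card {v : Fin n → Bool // OrientsGlued n k w w' C D v} =
      2 ^ Nat.card {x : ℕ // IsLeftmost n C D x ∧ IsCircleComp n C D x} := by
  classical
  have : Finite {x : ℕ // IsLeftmost n C D x ∧ IsCircleComp n C D x} :=
    ((Set.finite_Icc 1 n).subset fun x hx => ⟨hx.1.1, hx.1.2.1⟩).to_subtype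
  rw [show 2 = Nat.card Bool by simp, ← Nat.card_fun]
  refine Nat.card_eq_of_bijective (fun v x => vertexLabel v.1 x.1) ⟨?_, fun f => ?_⟩
  · rintro ⟨v, hv⟩ ⟨v', hv'⟩ hvv'
    refine Subtype.ext (funext fun i => ?_)
    show v i = v' i
    rw [← vertexLabel_succ v, ← vertexLabel_succ v']
    exact (hv.isOrientation (vertexLabel_succ v)).eq_of_eq_on_circles
      (hv'.isOrientation (vertexLabel_succ v')) (fun x hx hc => congrFun hvv' ⟨x, hx, hc⟩)
      (by omega) i.isLt
  · obtain ⟨g, hg, hgf⟩ := exists_isOrientation H fun x =>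
      if h : IsLeftmost n C D x ∧ IsCircleComp n C D x then f ⟨x, h⟩ else false
    refine ⟨⟨fun i => g (i.val + 1), hg.orientsGlued (fun _ => rfl) hw hwC⟩, funext fun x => ?_⟩
    show vertexLabel (fun i => g (i.val + 1)) x.1 = f x
    rw [vertexLabel_eq (fun _ => rfl) x.2.1.1 x.2.1.2.1, hgf x x.2.1 x.2.2, dif_pos x.2]

end Counting

end

theorem card_orientations_glued_general (n k : ℕ)
    (w w' : Fin n → Bool) (hw : IsWeightSeq n k w)
    (C D : CrossinglessMatching n) (hC : IsMw n w C) :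
    ((∃ v0, 1 ≤ v0 ∧ v0 ≤ n ∧ ¬ IsCircleComp n C D v0 ∧
        ¬ ComponentOrientable n w w' C D v0) →
      Nat.card {v : Fin n → Bool // OrientsGlued n k w w' C D v} = 0) ∧
    ((∀ v0, 1 ≤ v0 → v0 ≤ n → ¬ IsCircleComp n C D v0 →
        ComponentOrientable n w w' C D v0) →
      Nat.card {v : Fin n → Bool // OrientsGlued n k w w' C D v} =
        2 ^ Nat.card {v : ℕ // IsLeftmost n C D v ∧ IsCircleComp n C D v}) ∧
    (Nat.card {v : Fin n → Bool // OrientsGlued n k w w' C D v} = 1 ↔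
      ((∀ v0, 1 ≤ v0 → v0 ≤ n → ¬ IsCircleComp n C D v0 →
          ComponentOrientable n w w' C D v0) ∧
        Nat.card {v : ℕ // IsLeftmost n C D v ∧ IsCircleComp n C D v} = 0)) := by
  have hwC : FlipsOnCups C w := fun p hp h1 h2 => by simp [hC.1 p hp h1 h2]
  have card_eq_pow := card_orientsGlued_eq_two_pow (w' := w') (D := D) hw hwC
  refine ⟨fun ⟨_, _, _, _, hr⟩ => card_orientsGlued_eq_zero hr, card_eq_pow,
    fun h => ?_, fun ⟨H, hc⟩ => by rw [card_eq_pow H, hc, pow_zero]⟩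
  have H : ∀ v0, 1 ≤ v0 → v0 ≤ n → ¬ IsCircleComp n C D v0 →
      ComponentOrientable n w w' C D v0 := by
    intro r _ _ _
    by_contra hr
    exact zero_ne_one ((card_orientsGlued_eq_zero hr).symm.trans h)
  rw [card_eq_pow H, Nat.pow_eq_one] at h
  exact ⟨H, h.resolve_left (by decide)⟩

/-- The number of orientations of the glued diagram `D̄C` (with
`C = m(w)`, `D = m(w')`) is: zero if some line is not orientable; `2 ^ c` if every
line is orientable, where `c` is the number of circles; and equal to one exactly when
every line is orientable and there are no circles. -/
theorem card_orientations_glued (n k : ℕ) (hn : 1 ≤ n) (hkn : 2 * k ≤ n)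
    (w w' : Fin n → Bool) (hw : IsWeightSeq n k w) (hw' : IsWeightSeq n k w')
    (C D : CrossinglessMatching n) (hC : IsMw n w C) (hD : IsMw n w' D) :
    ((∃ v0, 1 ≤ v0 ∧ v0 ≤ n ∧ ¬ IsCircleComp n C D v0 ∧
        ¬ ComponentOrientable n w w' C D v0) →
      Nat.card {v : Fin n → Bool // OrientsGlued n k w w' C D v} = 0) ∧
    ((∀ v0, 1 ≤ v0 → v0 ≤ n → ¬ IsCircleComp n C D v0 →
        ComponentOrientable n w w' C D v0) →
      Nat.card {v : Fin n → Bool // OrientsGlued n k w w' C D v} =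
        2 ^ Nat.card {v : ℕ // IsLeftmost n C D v ∧ IsCircleComp n C D v}) ∧
    (Nat.card {v : Fin n → Bool // OrientsGlued n k w w' C D v} = 1 ↔
      ((∀ v0, 1 ≤ v0 → v0 ≤ n → ¬ IsCircleComp n C D v0 →
          ComponentOrientable n w w' C D v0) ∧
        Nat.card {v : ℕ // IsLeftmost n C D v ∧ IsCircleComp n C D v} = 0)) :=
  card_orientations_glued_general n k w w' hw C D hC

end Springer
end

section
/- There is exactly one complete N-invariant flag F in V with F_{n−k} = P, namely the standard flag given by F_i = span(p_1,…,p_i) for 0 ≤ i ≤ n−k and F_{n−k+j} = P + span(q_1,…,q_j) for 0 ≤ j ≤ k. -/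
open Module

namespace Springer

/-!
In coordinates the standard flag is `E i = span (e 0, …, e (i-1))` (`coordFlag n i`).
For `i < n - k`, `N` maps `E (i+1)` onto `E i`, so `N (F (i+1)) ⊆ F i` propagates
`E (i+1) ⊆ F (i+1)` down to `E i ⊆ F i`, starting from `F (n-k) = P = E (n-k)`.
For `i ≥ n - k`, `N⁻¹ (E i) ⊆ E (i+1)`, so `F i = E i` propagates up to `F (i+1) ⊆ E (i+1)`.
In both directions equal dimensions turn `⊆` into `=`.
-/

noncomputable def coordFlag (n i : ℕ) : Submodule ℂ (Fin n → ℂ) :=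
  Pi.spanSubset ℂ {j : Fin n | j.val < i}

lemma mem_coordFlag {n i : ℕ} {x : Fin n → ℂ} :
    x ∈ coordFlag n i ↔ ∀ j : Fin n, i ≤ j.val → x j = 0 := by
  simp only [coordFlag, Pi.mem_spanSubset_iff, Set.mem_ofPred_eq, not_lt]

lemma coordFlag_mono {n i i' : ℕ} (h : i ≤ i') : coordFlag n i ≤ coordFlag n i' :=
  fun _ hx => mem_coordFlag.2 fun j hj => mem_coordFlag.1 hx j (h.trans hj)

lemma finrank_coordFlag {n i : ℕ} (hi : i ≤ n) : finrank ℂ (coordFlag n i) = i := by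
  rw [coordFlag, Pi.dim_spanSubset, Set.ncard_eq_toFinset_card', Set.toFinset_ofPred,
    Fin.card_filter_val_lt, min_eq_right hi]

lemma spanPQ_eq_spanSubset (n k t b : ℕ) :
    spanPQ n k t b = Pi.spanSubset ℂ {j : Fin n |
      (j.val < t ∧ j.val < n - k) ∨ (n - k ≤ j.val ∧ j.val < n - k + b)} := by
  simp only [spanPQ, Pi.spanSubset, Pi.basisFun_apply]
  congr 1
  ext x
  simp only [Set.mem_ofPred_eq, Set.mem_image, eq_comm (a := x)]

lemma stdFlag_eq_coordFlag (n k : ℕ) (i : Fin (n + 1)) : stdFlag n k i = coordFlag n i := by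
  rw [stdFlag, spanPQ_eq_spanSubset, coordFlag]
  congr 1
  ext j
  simp only [Set.mem_ofPred_eq]
  omega

lemma Pmod_eq_coordFlag (n k : ℕ) : Pmod n k = coordFlag n (n - k) := by
  rw [Pmod, spanPQ_eq_spanSubset, coordFlag]
  congr 1
  ext j
  simp only [Set.mem_ofPred_eq]
  omega

lemma Nmap_apply (n k : ℕ) (x : Fin n → ℂ) (j : Fin n) :
    Nmap n k x j =
      if h : j.val + 1 < n ∧ j.val + 1 ≠ n - k then x ⟨j.val + 1, h.1⟩ else 0 :=
  rfl

lemma Nmap_single_s13 {n k : ℕ} (j : Fin n) (hj : j.val + 1 < n) (hjk : j.val + 1 ≠ n - k) :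
    Nmap n k (Pi.single ⟨j.val + 1, hj⟩ 1) = Pi.single j 1 := by
  funext a
  rw [Nmap_apply]
  split_ifs with ha
  · simp only [Pi.single_apply, Fin.ext_iff, add_left_inj]
  · have : a ≠ j := by rintro rfl; exact ha ⟨hj, hjk⟩
    simp [this]

lemma map_Nmap_coordFlag_le (n k i : ℕ) :
    Submodule.map (Nmap n k) (coordFlag n (i + 1)) ≤ coordFlag n i := by
  rintro _ ⟨x, hx, rfl⟩
  refine mem_coordFlag.2 fun j hj => ?_
  rw [Nmap_apply]
  split_ifs
  · exact mem_coordFlag.1 hx _ (by simp only; omega)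
  · rfl

lemma coordFlag_le_map_Nmap {n k i : ℕ} (hi : i < n - k) :
    coordFlag n i ≤ Submodule.map (Nmap n k) (coordFlag n (i + 1)) := by
  rw [coordFlag, Pi.spanSubset, Submodule.span_le]
  rintro _ ⟨j, hj, rfl⟩
  simp only [Set.mem_ofPred_eq] at hj
  have hj1 : j.val + 1 < n := by omega
  refine ⟨Pi.single ⟨j.val + 1, hj1⟩ 1, mem_coordFlag.2 fun a ha => ?_, ?_⟩
  · simp only [Pi.single_apply, Fin.ext_iff, ite_eq_right_iff, one_ne_zero, imp_false]
    omega
  · rw [Nmap_single_s13 j hj1 (by omega), Pi.basisFun_apply]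

lemma comap_Nmap_coordFlag_le {n k i : ℕ} (hi : n - k ≤ i) :
    Submodule.comap (Nmap n k) (coordFlag n i) ≤ coordFlag n (i + 1) := by
  intro x hx
  refine mem_coordFlag.2 fun j hj => ?_
  have h := mem_coordFlag.1 hx ⟨j.val - 1, by omega⟩ (by simp only; omega)
  rw [Nmap_apply, dif_pos (by simp only; omega)] at h
  simpa only [Nat.sub_add_cancel (by omega : 1 ≤ j.val)] using h

lemma isNFlag_stdFlag (n k : ℕ) : IsNFlag n k (stdFlag n k) := by
  rw [show stdFlag n k = fun i : Fin (n + 1) => coordFlag n i from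
    funext (stdFlag_eq_coordFlag n k)]
  refine ⟨?_, fun i => finrank_coordFlag (Nat.lt_succ_iff.1 i.isLt), fun i => ?_⟩
  · intro i i' h
    exact coordFlag_mono (Fin.le_def.1 h)
  · simpa only [Fin.val_succ, Fin.val_castSucc] using map_Nmap_coordFlag_le n k i

namespace IsNFlag

variable {n k : ℕ} {F : Fin (n + 1) → Submodule ℂ (Fin n → ℂ)}

lemma eq_coordFlag_of_le (hF : IsNFlag n k F)
    (hP : F ⟨n - k, Nat.sub_lt_succ n k⟩ = coordFlag n (n - k))
    {i : ℕ} (hi : i ≤ n - k) : F ⟨i, by omega⟩ = coordFlag n i := by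
  induction hi using Nat.decreasingInduction with
  | self => exact hP
  | of_succ i hi ih =>
    have hle : coordFlag n i ≤ F ⟨i, by omega⟩ :=
      calc coordFlag n i ≤ Submodule.map (Nmap n k) (coordFlag n (i + 1)) :=
            coordFlag_le_map_Nmap hi
        _ = Submodule.map (Nmap n k) (F ⟨i + 1, by omega⟩) := by rw [ih]
        _ ≤ F ⟨i, by omega⟩ := hF.2.2 ⟨i, by omega⟩
    refine (Submodule.eq_of_le_of_finrank_eq hle ?_).symm
    rw [finrank_coordFlag (by omega), hF.2.1]

lemma eq_coordFlag_of_ge (hF : IsNFlag n k F)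
    (hP : F ⟨n - k, Nat.sub_lt_succ n k⟩ = coordFlag n (n - k))
    {i : ℕ} (hi : n - k ≤ i) (hin : i ≤ n) : F ⟨i, by omega⟩ = coordFlag n i := by
  induction i, hi using Nat.le_induction with
  | base => exact hP
  | succ i hi ih =>
    have hle : F ⟨i + 1, by omega⟩ ≤ coordFlag n (i + 1) :=
      calc F ⟨i + 1, by omega⟩ ≤ Submodule.comap (Nmap n k) (F ⟨i, by omega⟩) :=
            Submodule.map_le_iff_le_comap.1 (hF.2.2 ⟨i, by omega⟩)
        _ = Submodule.comap (Nmap n k) (coordFlag n i) := by rw [ih (by omega)]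
        _ ≤ coordFlag n (i + 1) := comap_Nmap_coordFlag_le hi
    refine Submodule.eq_of_le_of_finrank_eq hle ?_
    rw [finrank_coordFlag hin, hF.2.1]

end IsNFlag

/-- There is exactly one complete `N`-invariant flag `F` with
`F (n - k) = P`, namely the standard flag. -/
theorem unique_flag_through_P (n k : ℕ) :
    (IsNFlag n k (stdFlag n k) ∧ stdFlag n k ⟨n - k, by omega⟩ = Pmod n k) ∧
    ∀ F : Fin (n + 1) → Submodule ℂ (Fin n → ℂ),
      IsNFlag n k F → F ⟨n - k, by omega⟩ = Pmod n k → F = stdFlag n k := by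
  refine ⟨⟨isNFlag_stdFlag n k, by rw [stdFlag_eq_coordFlag, Pmod_eq_coordFlag]⟩, ?_⟩
  intro F hF hP
  rw [Pmod_eq_coordFlag] at hP
  funext ⟨i, hi⟩
  rw [stdFlag_eq_coordFlag]
  rcases le_total i (n - k) with h | h
  · exact hF.eq_coordFlag_of_le hP h
  · exact hF.eq_coordFlag_of_ge hP h (by omega)

end Springer
end
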